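/- Let L_τ > 1 and let τ: [0, 2π] → [0, 2π] be a strictly increasing bijection with τ(0)=0, τ(2π)=2π that is bi-Lipschitz with constant L_τ (i.e., L_τ⁻¹|θ−θ′| ≤ |τ(θ)−τ(θ′)| ≤ L_τ|θ−θ′|). Define R: 𝔻² → 𝔻² in polar coordinates by R(ζ) = (‖ζ‖₂ sin τ(ϑ(ζ)), ‖ζ‖₂ cos τ(ϑ(ζ))) for ζ ≠ 0 and R(0) = 0, where ϑ(ζ) ∈ [0,2π) is the angle of ζ. Then R is a Lipschitz map: there exists C ∈ (0,∞) such that ‖R(ζ) − R(ζ′)‖₂ ≤ C‖ζ − ζ′‖₂ for all ζ, ζ′ ∈ 𝔻². -/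

import Mathlib

noncomputable section
open Real
open scoped Classical

abbrev E2 := EuclideanSpace ℝ (Fin 2)

def pt (a b : ℝ) : E2 := (WithLp.equiv 2 (Fin 2 → ℝ)).symm ![a, b]

/-- The closed unit disk in the plane. -/
def Disk : Set E2 := Metric.closedBall 0 1

/-!
In polar coordinates `‖r(sin α, cos α) - r'(sin β, cos β)‖² = (r - r')² + 4 r r' sin²((α - β)/2)`,
and `R` only changes the angles, so it suffices to bound the chord `|sin((τ θ - τ θ')/2)|` by a
multiple of `|sin((θ - θ')/2)|`. For `θ' ≤ θ` the chord is at most `L (θ - θ')/2`, and also at most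
`L (2π - (θ - θ'))/2` by going around the circle through `τ (2π) = 2π ≡ 0 = τ 0`. By Jordan's
inequality the smaller of `θ - θ'` and `2π - (θ - θ')` is at most `π sin((θ - θ')/2)`, so
`C = L π / 2` works.
-/

open Set

lemma abs_sin_half_sub_le_add (a b c : ℝ) :
    |sin ((a - c) / 2)| ≤ |sin ((a - b) / 2)| + |sin ((b - c) / 2)| := by
  rw [show (a - c) / 2 = (a - b) / 2 + (b - c) / 2 by ring, sin_add]
  calc |sin ((a - b) / 2) * cos ((b - c) / 2) + cos ((a - b) / 2) * sin ((b - c) / 2)|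
      ≤ |sin ((a - b) / 2) * cos ((b - c) / 2)| + |cos ((a - b) / 2) * sin ((b - c) / 2)| :=
        abs_add_le _ _
    _ = |sin ((a - b) / 2)| * |cos ((b - c) / 2)| + |cos ((a - b) / 2)| * |sin ((b - c) / 2)| := by
        rw [abs_mul, abs_mul]
    _ ≤ |sin ((a - b) / 2)| * 1 + 1 * |sin ((b - c) / 2)| := by
        gcongr <;> exact abs_cos_le_one _
    _ = _ := by ring

lemma abs_sin_half_le (x : ℝ) : |sin (x / 2)| ≤ |x| / 2 := by
  simpa [abs_div] using abs_sin_le_abs (x := x / 2)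

lemma min_le_pi_mul_sin_half {a : ℝ} (ha₀ : 0 ≤ a) (ha : a ≤ 2 * π) :
    min a (2 * π - a) ≤ π * sin (a / 2) := by
  rcases le_total a π with h | h
  · have hJordan := mul_le_sin (x := a / 2) (by linarith) (by linarith)
    calc min a (2 * π - a) ≤ a := min_le_left _ _
      _ = π * (2 / π * (a / 2)) := by field_simp
      _ ≤ π * sin (a / 2) := by gcongr
  · have hJordan := mul_le_sin (x := (2 * π - a) / 2) (by linarith) (by linarith)
    rw [show (2 * π - a) / 2 = π - a / 2 by ring, sin_pi_sub] at hJordan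
    calc min a (2 * π - a) ≤ 2 * π - a := min_le_right _ _
      _ = π * (2 / π * (π - a / 2)) := by field_simp
      _ ≤ π * sin (a / 2) := by gcongr

section LipschitzOnCircle

variable {L : ℝ} {τ : ℝ → ℝ}

lemma one_le_of_lipschitzOn_fixing_endpoints (hτ₀ : τ 0 = 0) (hτ₂ : τ (2 * π) = 2 * π)
    (hτ : ∀ x ∈ Icc 0 (2 * π), ∀ y ∈ Icc 0 (2 * π), |τ x - τ y| ≤ L * |x - y|) : 1 ≤ L := by
  have h := hτ (2 * π) ⟨by positivity, le_rfl⟩ 0 ⟨le_rfl, by positivity⟩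
  rw [hτ₀, hτ₂, sub_zero, abs_of_pos two_pi_pos] at h
  nlinarith [two_pi_pos]

lemma abs_sin_half_sub_le_mul_min (hτ₀ : τ 0 = 0) (hτ₂ : τ (2 * π) = 2 * π)
    (hτ : ∀ x ∈ Icc 0 (2 * π), ∀ y ∈ Icc 0 (2 * π), |τ x - τ y| ≤ L * |x - y|)
    {x y : ℝ} (hx : x ∈ Icc 0 (2 * π)) (hy : y ∈ Icc 0 (2 * π)) (hyx : y ≤ x) :
    |sin ((τ x - τ y) / 2)| ≤ L / 2 * min (x - y) (2 * π - (x - y)) := by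
  have hL := one_le_of_lipschitzOn_fixing_endpoints hτ₀ hτ₂ hτ
  have h₂ : (2 * π) ∈ Icc 0 (2 * π) := ⟨by positivity, le_rfl⟩
  have h₀ : (0 : ℝ) ∈ Icc 0 (2 * π) := ⟨le_rfl, by positivity⟩
  have hshort : |sin ((τ x - τ y) / 2)| ≤ L * (x - y) / 2 := by
    have hxy := hτ x hx y hy
    rw [abs_of_nonneg (sub_nonneg.2 hyx)] at hxy
    linarith [abs_sin_half_le (τ x - τ y)]
  have hlong : |sin ((τ x - τ y) / 2)| ≤ L * (2 * π - (x - y)) / 2 := by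
    have hwrap : |sin ((τ (2 * π) - τ y) / 2)| = |sin ((τ y - τ 0) / 2)| := by
      rw [hτ₀, hτ₂, show (2 * π - τ y) / 2 = π - (τ y - 0) / 2 by ring, sin_pi_sub]
    have h₁ := hτ x hx (2 * π) h₂
    have h₃ := hτ y hy 0 h₀
    rw [abs_sub_comm x, abs_of_nonneg (sub_nonneg.2 hx.2)] at h₁
    rw [sub_zero, abs_of_nonneg hy.1] at h₃
    linarith [abs_sin_half_sub_le_add (τ x) (τ (2 * π)) (τ y),
      abs_sin_half_le (τ x - τ (2 * π)), abs_sin_half_le (τ y - τ 0)]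
  rw [mul_min_of_nonneg _ _ (by linarith)]
  exact le_min (by linarith) (by linarith)

lemma abs_sin_half_sub_le_of_lipschitzOn (hτ₀ : τ 0 = 0) (hτ₂ : τ (2 * π) = 2 * π)
    (hτ : ∀ x ∈ Icc 0 (2 * π), ∀ y ∈ Icc 0 (2 * π), |τ x - τ y| ≤ L * |x - y|)
    {x y : ℝ} (hx : x ∈ Icc 0 (2 * π)) (hy : y ∈ Icc 0 (2 * π)) :
    |sin ((τ x - τ y) / 2)| ≤ L * π / 2 * |sin ((x - y) / 2)| := by
  wlog hyx : y ≤ x generalizing x y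
  · have h := this hy hx (le_of_not_ge hyx)
    rwa [← neg_sub (τ x), ← neg_sub x, neg_div, neg_div, sin_neg, sin_neg, abs_neg,
      abs_neg] at h
  have hL := one_le_of_lipschitzOn_fixing_endpoints hτ₀ hτ₂ hτ
  have hxy₀ : 0 ≤ x - y := sub_nonneg.2 hyx
  have hxy : x - y ≤ 2 * π := by linarith [hx.2, hy.1]
  have hsin : 0 ≤ sin ((x - y) / 2) := sin_nonneg_of_nonneg_of_le_pi (by linarith) (by linarith)
  rw [abs_of_nonneg hsin]
  calc |sin ((τ x - τ y) / 2)| ≤ L / 2 * min (x - y) (2 * π - (x - y)) :=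
        abs_sin_half_sub_le_mul_min hτ₀ hτ₂ hτ hx hy hyx
    _ ≤ L / 2 * (π * sin ((x - y) / 2)) := by
        gcongr
        exact min_le_pi_mul_sin_half hxy₀ hxy
    _ = L * π / 2 * sin ((x - y) / 2) := by ring

end LipschitzOnCircle

def polar (r θ : ℝ) : E2 := pt (r * sin θ) (r * cos θ)

@[simp]
lemma polar_zero_left (θ : ℝ) : polar 0 θ = 0 := by
  ext i; fin_cases i <;> simp [polar, pt]

lemma norm_polar_sub_polar_sq (r r' α β : ℝ) :
    ‖polar r α - polar r' β‖ ^ 2 = (r - r') ^ 2 + 4 * r * r' * sin ((α - β) / 2) ^ 2 := by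
  have hcos : cos (α - β) = 1 - 2 * sin ((α - β) / 2) ^ 2 := by
    rw [← cos_two_mul_eq_one_sub]; ring_nf
  rw [EuclideanSpace.norm_sq_eq, Fin.sum_univ_two]
  simp only [polar, pt, WithLp.equiv_symm_apply, WithLp.ofLp_sub, Pi.sub_apply,
    Matrix.cons_val_zero, Matrix.cons_val_one, Real.norm_eq_abs, sq_abs]
  linear_combination r ^ 2 * sin_sq_add_cos_sq α + r' ^ 2 * sin_sq_add_cos_sq β
    + 2 * r * r' * cos_sub α β - 2 * r * r' * hcos

lemma norm_polar_sub_polar_le {r r' α β α' β' K : ℝ} (hr : 0 ≤ r) (hr' : 0 ≤ r') (hK : 1 ≤ K)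
    (h : |sin ((α' - β') / 2)| ≤ K * |sin ((α - β) / 2)|) :
    ‖polar r α' - polar r' β'‖ ≤ K * ‖polar r α - polar r' β‖ := by
  refine le_of_pow_le_pow_left₀ two_ne_zero (by positivity) ?_
  have hsin : sin ((α' - β') / 2) ^ 2 ≤ K ^ 2 * sin ((α - β) / 2) ^ 2 := by
    rw [← sq_abs, ← sq_abs (sin _), ← mul_pow]
    exact pow_le_pow_left₀ (abs_nonneg _) h 2
  have hK2 : 1 ≤ K ^ 2 := one_le_pow₀ hK
  rw [mul_pow, norm_polar_sub_polar_sq, norm_polar_sub_polar_sq]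
  nlinarith [mul_nonneg hr hr', sq_nonneg (r - r'), sq_nonneg (sin ((α - β) / 2))]

theorem stmt_8_general (Lτ : ℝ) (τ : ℝ → ℝ)
    (hτ0 : τ 0 = 0) (hτ2π : τ (2 * π) = 2 * π)
    (hbiLip : ∀ θ ∈ Set.Icc 0 (2 * π), ∀ θ' ∈ Set.Icc 0 (2 * π),
      Lτ⁻¹ * |θ - θ'| ≤ |τ θ - τ θ'| ∧ |τ θ - τ θ'| ≤ Lτ * |θ - θ'|)
    (ϑ : E2 → ℝ)
    (hϑ : ∀ ζ : E2, ζ ≠ 0 →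
      ϑ ζ ∈ Set.Ico 0 (2 * π) ∧ ζ 0 = ‖ζ‖ * sin (ϑ ζ) ∧ ζ 1 = ‖ζ‖ * cos (ϑ ζ))
    (R : E2 → E2)
    (hR : ∀ ζ : E2, R ζ =
      if ζ = 0 then 0 else pt (‖ζ‖ * sin (τ (ϑ ζ))) (‖ζ‖ * cos (τ (ϑ ζ)))) :
    ∃ C > (0:ℝ), ∀ ζ ∈ Disk, ∀ ζ' ∈ Disk, ‖R ζ - R ζ'‖ ≤ C * ‖ζ - ζ'‖ := by
  have hLip : ∀ x ∈ Icc 0 (2 * π), ∀ y ∈ Icc 0 (2 * π), |τ x - τ y| ≤ Lτ * |x - y| :=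
    fun x hx y hy => (hbiLip x hx y hy).2
  have hL := one_le_of_lipschitzOn_fixing_endpoints hτ0 hτ2π hLip
  have hpolar : ∀ ζ : E2, ∃ θ ∈ Icc 0 (2 * π), polar ‖ζ‖ θ = ζ ∧ polar ‖ζ‖ (τ θ) = R ζ := by
    intro ζ
    by_cases hζ : ζ = 0
    · exact ⟨0, ⟨le_rfl, by positivity⟩, by simp [hζ], by simp [hR, hζ]⟩
    obtain ⟨hθ, h0, h1⟩ := hϑ ζ hζ
    refine ⟨ϑ ζ, Ico_subset_Icc_self hθ, ?_, by rw [hR, if_neg hζ]; rfl⟩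
    ext i; fin_cases i
    exacts [h0.symm, h1.symm]
  refine ⟨Lτ * π / 2, by positivity, fun ζ _ ζ' _ => ?_⟩
  obtain ⟨θ, hθ, hζ, hRζ⟩ := hpolar ζ
  obtain ⟨θ', hθ', hζ', hRζ'⟩ := hpolar ζ'
  rw [← hRζ, ← hRζ']
  conv_rhs => rw [← hζ, ← hζ']
  exact norm_polar_sub_polar_le (norm_nonneg _) (norm_nonneg _) (by nlinarith [pi_gt_three])
    (abs_sin_half_sub_le_of_lipschitzOn hτ0 hτ2π hLip hθ hθ')

theorem stmt_8 (Lτ : ℝ) (hLτ : 1 < Lτ) (τ : ℝ → ℝ)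
    (hmono : StrictMonoOn τ (Set.Icc 0 (2 * π)))
    (hbij : Set.BijOn τ (Set.Icc 0 (2 * π)) (Set.Icc 0 (2 * π)))
    (hτ0 : τ 0 = 0) (hτ2π : τ (2 * π) = 2 * π)
    (hbiLip : ∀ θ ∈ Set.Icc 0 (2 * π), ∀ θ' ∈ Set.Icc 0 (2 * π),
      Lτ⁻¹ * |θ - θ'| ≤ |τ θ - τ θ'| ∧ |τ θ - τ θ'| ≤ Lτ * |θ - θ'|)
    (ϑ : E2 → ℝ)
    (hϑ : ∀ ζ : E2, ζ ≠ 0 →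
      ϑ ζ ∈ Set.Ico 0 (2 * π) ∧ ζ 0 = ‖ζ‖ * sin (ϑ ζ) ∧ ζ 1 = ‖ζ‖ * cos (ϑ ζ))
    (R : E2 → E2)
    (hR : ∀ ζ : E2, R ζ =
      if ζ = 0 then 0 else pt (‖ζ‖ * sin (τ (ϑ ζ))) (‖ζ‖ * cos (τ (ϑ ζ)))) :
    ∃ C > (0:ℝ), ∀ ζ ∈ Disk, ∀ ζ' ∈ Disk, ‖R ζ - R ζ'‖ ≤ C * ‖ζ - ζ'‖ :=
  stmt_8_general Lτ τ hτ0 hτ2π hbiLip ϑ hϑ R hR
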